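/- If W satisfies the Markov chain Y – X – W and I(X;Y|W)=0, then for every pair (x,w) with p(x,w)>0 we have p(y|w)=p(y|x) for all y; consequently W* = g(W) almost surely, where g(w) = p(Y|w) and W* = p(Y|X). That is, any sufficient representation determines the minimal sufficient statistic. -/

import Mathlib

open Real Finset

noncomputable section

variable {X Y W : Type*} [Fintype X] [Fintype Y] [Fintype W]

/-- Marginal `p(x)` of a joint pmf on `X × Y × W`. -/
def pX (p : X → Y → W → ℝ) (x : X) : ℝ := ∑ y, ∑ w, p x y w

/-- Marginal `p(y)`. -/
def pY (p : X → Y → W → ℝ) (y : Y) : ℝ := ∑ x, ∑ w, p x y w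

/-- Marginal `p(w)`. -/
def pW (p : X → Y → W → ℝ) (w : W) : ℝ := ∑ x, ∑ y, p x y w

/-- Marginal `p(x,y)`. -/
def pXY (p : X → Y → W → ℝ) (x : X) (y : Y) : ℝ := ∑ w, p x y w

/-- Marginal `p(x,w)`. -/
def pXW (p : X → Y → W → ℝ) (x : X) (w : W) : ℝ := ∑ y, p x y w

/-- Marginal `p(y,w)`. -/
def pYW (p : X → Y → W → ℝ) (y : Y) (w : W) : ℝ := ∑ x, p x y w

/-- Conditional `p(y|x)`. -/
def condYX (p : X → Y → W → ℝ) (x : X) (y : Y) : ℝ := pXY p x y / pX p x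

/-- Conditional `p(y|w)` (the decoder distribution). -/
def condYW (p : X → Y → W → ℝ) (w : W) (y : Y) : ℝ := pYW p y w / pW p w

/-- `p` is a probability mass function on `X × Y × W`. -/
def IsJoint (p : X → Y → W → ℝ) : Prop :=
  (∀ x y w, 0 ≤ p x y w) ∧ ∑ x, ∑ y, ∑ w, p x y w = 1

/-- The Markov chain `Y – X – W`: `p(w|x,y) = p(w|x)` whenever `p(x,y) > 0`. -/
def Markov (p : X → Y → W → ℝ) : Prop :=
  ∀ x y w, 0 < pXY p x y → p x y w / pXY p x y = pXW p x w / pX p x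

/-- Conditional entropy `H(Y|X)` (natural log). -/
def HYgX (p : X → Y → W → ℝ) : ℝ := -∑ x, ∑ y, pXY p x y * log (condYX p x y)

/-- Conditional entropy `H(Y|W)`. -/
def HYgW (p : X → Y → W → ℝ) : ℝ := -∑ w, ∑ y, pYW p y w * log (condYW p w y)

/-- Conditional mutual information `I(X;Y|W)`. -/
def IXYgW (p : X → Y → W → ℝ) : ℝ :=
  ∑ x, ∑ y, ∑ w, p x y w * log (p x y w * pW p w / (pXW p x w * pYW p y w))

/-- Conditional mutual information `I(X;W|Y)`. -/
def IXWgY (p : X → Y → W → ℝ) : ℝ :=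
  ∑ x, ∑ y, ∑ w, p x y w * log (p x y w * pY p y / (pXY p x y * pYW p y w))

/-- Mutual information `I(X;Y)`. -/
def IXY (p : X → Y → W → ℝ) : ℝ :=
  ∑ x, ∑ y, pXY p x y * log (pXY p x y / (pX p x * pY p y))

/-- Mutual information `I(W;Y)`. -/
def IWY (p : X → Y → W → ℝ) : ℝ :=
  ∑ y, ∑ w, pYW p y w * log (pYW p y w / (pY p y * pW p w))

/-- Mutual information `I(X;W)`. -/
def IXW (p : X → Y → W → ℝ) : ℝ :=
  ∑ x, ∑ w, pXW p x w * log (pXW p x w / (pX p x * pW p w))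

/-- Kullback–Leibler divergence between pmfs on `Y` (natural log). -/
def klD (q r : Y → ℝ) : ℝ := ∑ y, q y * log (q y / r y)


/-! Conditional independence `X ⊥ Y | W` is the equality case of Gibbs' inequality for
`I(X;Y|W)`, the relative entropy of `p(x,y,w)` from `p(x|w) p(y|w) p(w)`; it gives
`p(y|x,w) = p(y|w)` where `p(x,w) > 0`. The Markov chain `Y – X – W` gives
`p(y|x,w) = p(y|x)` there, so the two conditionals of `Y` agree. -/

open InformationTheory

section Gibbs

lemma mul_log_div_sub_sub_eq_mul_klFun (a : ℝ) {b : ℝ} (hb : b ≠ 0) :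
    a * log (a / b) - (a - b) = b * klFun (a / b) := by
  rw [klFun_apply]
  field_simp
  ring

lemma sub_le_mul_log_div {a b : ℝ} (ha : 0 ≤ a) (hb : 0 ≤ b) (hab : 0 < a → 0 < b) :
    a - b ≤ a * log (a / b) := by
  rcases hb.eq_or_lt with rfl | hb
  · simp [le_antisymm (not_lt.mp (mt hab (lt_irrefl 0))) ha]
  · rw [← sub_nonneg, mul_log_div_sub_sub_eq_mul_klFun a hb.ne']
    exact mul_nonneg hb.le (klFun_nonneg (by positivity))

lemma eq_of_mul_log_div_eq_sub {a b : ℝ} (ha : 0 ≤ a) (hb : 0 ≤ b) (hab : 0 < a → 0 < b)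
    (h : a * log (a / b) = a - b) : a = b := by
  rcases hb.eq_or_lt with rfl | hb
  · exact le_antisymm (not_lt.mp (mt hab (lt_irrefl 0))) ha
  · rw [← sub_eq_zero, mul_log_div_sub_sub_eq_mul_klFun a hb.ne', mul_eq_zero,
      klFun_eq_zero_iff (by positivity), div_eq_one_iff_eq hb.ne'] at h
    exact h.resolve_left hb.ne'

lemma eq_of_sum_mul_log_div_eq_zero {ι : Type*} [Fintype ι] {a b : ι → ℝ}
    (ha : ∀ i, 0 ≤ a i) (hb : ∀ i, 0 ≤ b i) (hab : ∀ i, 0 < a i → 0 < b i)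
    (hsum : ∑ i, a i = ∑ i, b i) (h : ∑ i, a i * log (a i / b i) = 0) : a = b := by
  have hgap : ∀ i ∈ univ, 0 ≤ a i * log (a i / b i) - (a i - b i) := fun i _ =>
    sub_nonneg.mpr (sub_le_mul_log_div (ha i) (hb i) (hab i))
  have hgap_sum : ∑ i, (a i * log (a i / b i) - (a i - b i)) = 0 := by
    rw [sum_sub_distrib, sum_sub_distrib, h, hsum, sub_self, sub_zero]
  funext i
  exact eq_of_mul_log_div_eq_sub (ha i) (hb i) (hab i)
    (sub_eq_zero.mp ((sum_eq_zero_iff_of_nonneg hgap).mp hgap_sum i (mem_univ i)))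

end Gibbs

section Marginals

variable (p : X → Y → W → ℝ)

omit [Fintype W] in
lemma pW_eq_sum_pYW (w : W) : pW p w = ∑ y, pYW p y w := sum_comm

omit [Fintype X] in
lemma pX_eq_sum_pXW (x : X) : pX p x = ∑ w, pXW p x w := sum_comm

lemma sum_comm_three {M : Type*} [AddCommMonoid M] (f : X → Y → W → M) :
    ∑ x, ∑ y, ∑ w, f x y w = ∑ w, ∑ x, ∑ y, f x y w :=
  (sum_congr rfl fun _ _ => sum_comm).trans sum_comm

variable {p} (h0 : ∀ x y w, 0 ≤ p x y w)
include h0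

omit [Fintype X] [Fintype Y] in
lemma le_pXY (x : X) (y : Y) (w : W) : p x y w ≤ pXY p x y :=
  single_le_sum (fun w _ => h0 x y w) (mem_univ w)

omit [Fintype X] [Fintype W] in
lemma le_pXW (x : X) (y : Y) (w : W) : p x y w ≤ pXW p x w :=
  single_le_sum (fun y _ => h0 x y w) (mem_univ y)

omit [Fintype Y] [Fintype W] in
lemma le_pYW (x : X) (y : Y) (w : W) : p x y w ≤ pYW p y w :=
  single_le_sum (fun x _ => h0 x y w) (mem_univ x)

omit [Fintype X] [Fintype W] in
lemma pXW_nonneg (x : X) (w : W) : 0 ≤ pXW p x w :=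
  sum_nonneg fun y _ => h0 x y w

omit [Fintype Y] [Fintype W] in
lemma pYW_nonneg (y : Y) (w : W) : 0 ≤ pYW p y w :=
  sum_nonneg fun x _ => h0 x y w

omit [Fintype W] in
lemma pXW_le_pW (x : X) (w : W) : pXW p x w ≤ pW p w :=
  single_le_sum (fun x _ => pXW_nonneg h0 x w) (mem_univ x)

omit [Fintype X] in
lemma pXW_le_pX (x : X) (w : W) : pXW p x w ≤ pX p x := by
  rw [pX_eq_sum_pXW]
  exact single_le_sum (fun w _ => pXW_nonneg h0 x w) (mem_univ w)

end Marginals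

section CondIndep

variable (p : X → Y → W → ℝ)

/-- The law `p(x|w) p(y|w) p(w)` under which `X ⊥ Y | W`, with the same `(X,W)` and `(Y,W)`
marginals as `p`. -/
def condIndepLaw (x : X) (y : Y) (w : W) : ℝ := pXW p x w * pYW p y w / pW p w

lemma sum_condIndepLaw :
    ∑ x, ∑ y, ∑ w, condIndepLaw p x y w = ∑ x, ∑ y, ∑ w, p x y w := by
  have hfiber : ∀ w, ∑ x, ∑ y, condIndepLaw p x y w = pW p w := fun w => by
    simp only [condIndepLaw, ← sum_div, ← mul_sum, ← sum_mul]
    rw [← pW_eq_sum_pYW]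
    exact mul_self_div_self (pW p w)
  rw [sum_comm_three, sum_comm_three p]
  exact sum_congr rfl fun w _ => hfiber w

lemma IXYgW_eq_sum_mul_log_div_condIndepLaw :
    IXYgW p = ∑ x, ∑ y, ∑ w, p x y w * log (p x y w / condIndepLaw p x y w) := by
  simp only [IXYgW, condIndepLaw, div_div_eq_mul_div]

variable {p}

theorem eq_condIndepLaw_of_IXYgW_eq_zero (h0 : ∀ x y w, 0 ≤ p x y w) (h : IXYgW p = 0) :
    ∀ x y w, p x y w = condIndepLaw p x y w := by
  have hq : ∀ x y w, 0 ≤ condIndepLaw p x y w := fun x y w =>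
    div_nonneg (mul_nonneg (pXW_nonneg h0 x w) (pYW_nonneg h0 y w))
      ((pXW_nonneg h0 x w).trans (pXW_le_pW h0 x w))
  have hpq : ∀ x y w, 0 < p x y w → 0 < condIndepLaw p x y w := fun x y w hpos => by
    have hxw := hpos.trans_le (le_pXW h0 x y w)
    exact div_pos (mul_pos hxw (hpos.trans_le (le_pYW h0 x y w)))
      (hxw.trans_le (pXW_le_pW h0 x w))
  have hsum := sum_condIndepLaw p
  rw [IXYgW_eq_sum_mul_log_div_condIndepLaw] at h
  simp only [← Fintype.sum_prod_type'] at h hsum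
  have huncurried := eq_of_sum_mul_log_div_eq_zero
    (a := fun t : X × Y × W => p t.1 t.2.1 t.2.2) (b := fun t => condIndepLaw p t.1 t.2.1 t.2.2)
    (fun _ => h0 _ _ _) (fun _ => hq _ _ _) (fun _ => hpq _ _ _) hsum.symm h
  exact fun x y w => congrFun huncurried (x, y, w)

end CondIndep

omit [Fintype X] in
lemma Markov.mul_pX_eq {p : X → Y → W → ℝ} (hm : Markov p) (h0 : ∀ x y w, 0 ≤ p x y w)
    {x : X} (hx : 0 < pX p x) (y : Y) (w : W) :
    p x y w * pX p x = pXY p x y * pXW p x w := by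
  rcases ((h0 x y w).trans (le_pXY h0 x y w)).eq_or_lt with hxy | hxy
  · rw [← hxy, le_antisymm (hxy ▸ le_pXY h0 x y w) (h0 x y w), zero_mul, zero_mul]
  · have h := hm x y w hxy
    rw [div_eq_div_iff hxy.ne' hx.ne'] at h
    linear_combination h

/-- if `Y – X – W` is a Markov chain and `I(X;Y|W) = 0`, then
`p(y|w) = p(y|x)` for every pair `(x,w)` with `p(x,w) > 0`; consequently
`W* = g(W)` almost surely, where `g(w) = p(Y|w)` and `W* = p(Y|X)`. -/
theorem sufficiency_determines_minimal_sufficient_statistic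
    (p : X → Y → W → ℝ) (hp : IsJoint p) (hm : Markov p) (hsuff : IXYgW p = 0) :
    (∀ x w, 0 < pXW p x w → ∀ y, condYW p w y = condYX p x y) ∧
    (∀ x w, 0 < pXW p x w → condYW p w = condYX p x) := by
  have hcondIndep := eq_condIndepLaw_of_IXYgW_eq_zero hp.1 hsuff
  have hcond : ∀ x w, 0 < pXW p x w → ∀ y, condYW p w y = condYX p x y := by
    intro x w hxw y
    have hW : 0 < pW p w := hxw.trans_le (pXW_le_pW hp.1 x w)
    have hX : 0 < pX p x := hxw.trans_le (pXW_le_pX hp.1 x w)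
    have hmarkov := hm.mul_pX_eq hp.1 hX y w
    rw [hcondIndep x y w, condIndepLaw] at hmarkov
    rw [condYW, condYX, div_eq_div_iff hW.ne' hX.ne']
    field_simp at hmarkov
    linear_combination hmarkov
  exact ⟨hcond, fun x w hxw => funext (hcond x w hxw)⟩
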